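/- arXiv:2410.09554 — 5 statements merged into one kernel-verified Lean document; each statement's English description precedes it below -/
import Mathlib

section
/- Let K, d, D, L be positive integers with K ≥ 4, 2 < d ≤ D, and L ≥ 2·K^(D−1). Let α ∈ (0,1) be a real number with K·α ≠ 1, and let α* ∈ (0,1) be the unique solution of α^(d−2)·(K^(d−D) + α) − 1 = 0 on (0,1). If α < max{2/K, α*}, then R(K, α, d, L) := K·((K·α)^(d−1) − 1)/(L·(K·α − 1)) + α^(d−1) < 1. (Paper's Theorem 1, case d > 2.) -/
lemma geom_sum_le_two_mul (x : ℝ) (hx : 2 ≤ x) (n : ℕ) :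
    ∑ i ∈ Finset.range (n + 1), x ^ i ≤ 2 * x ^ n := by
  induction n with
  | zero => simp
  | succ n ih =>
      rw [Finset.sum_range_succ]
      have hx0 : (0 : ℝ) ≤ x := le_trans (by norm_num) hx
      have h1 : 2 * x ^ n ≤ x ^ (n + 1) := by
        rw [pow_succ]; nlinarith [pow_nonneg hx0 n]
      calc ∑ i ∈ Finset.range (n + 1), x ^ i + x ^ (n + 1)
          ≤ 2 * x ^ n + x ^ (n + 1) := by linarith
        _ ≤ 2 * x ^ (n + 1) := by linarith

/-- Theorem 1 of the paper, case `d > 2`: if `α < max {2/K, α*}`, where `α*` is the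
unique root in `(0,1)` of `α^(d-2) * (K^(d-D) + α) - 1 = 0`, then the ratio
`R(K, α, d, L) = K((Kα)^(d-1) - 1)/(L(Kα - 1)) + α^(d-1)` is smaller than one. -/
theorem tree_ratio_lt_one_deep
    (K d D L : ℕ) (hK : 4 ≤ K) (hd : 2 < d) (hdD : d ≤ D) (hL0 : 0 < L)
    (hL : 2 * K ^ (D - 1) ≤ L)
    (α : ℝ) (hα : α ∈ Set.Ioo (0 : ℝ) 1) (hKα : (K : ℝ) * α ≠ 1)
    (αstar : ℝ) (hαstar : αstar ∈ Set.Ioo (0 : ℝ) 1)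
    (hroot : αstar ^ (d - 2) * ((K : ℝ) ^ ((d : ℤ) - (D : ℤ)) + αstar) - 1 = 0)
    (hlt : α < max (2 / (K : ℝ)) αstar) :
    (K : ℝ) * (((K : ℝ) * α) ^ (d - 1) - 1) / ((L : ℝ) * ((K : ℝ) * α - 1))
      + α ^ (d - 1) < 1 := by
  obtain ⟨hα0, hα1⟩ := hα
  obtain ⟨hs0, hs1⟩ := hαstar
  set x : ℝ := (K : ℝ) * α with hxdef
  have hK0 : (0 : ℝ) < K := by positivity
  have hK4 : (4 : ℝ) ≤ K := by exact_mod_cast hK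
  have hL0' : (0 : ℝ) < L := by exact_mod_cast hL0
  have hLK : (2 : ℝ) * (K : ℝ) ^ (D - 1) ≤ L := by exact_mod_cast hL
  have hx0 : 0 < x := by positivity
  have hxne : x - 1 ≠ 0 := sub_ne_zero.mpr hKα
  set S : ℝ := ∑ i ∈ Finset.range (d - 1), x ^ i with hSdef
  have hS0 : 0 ≤ S := Finset.sum_nonneg fun i _ => pow_nonneg hx0.le i
  have hrw : (K : ℝ) * (x ^ (d - 1) - 1) / ((L : ℝ) * (x - 1)) = (K / L) * S := by
    rw [hSdef, geom_sum_eq hKα]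
    field_simp
  rw [hrw]
  rcases lt_or_ge α (2 / (K : ℝ)) with hc | hc
  · -- case α < 2/K
    have hx2 : x < 2 := by
      rw [lt_div_iff₀ hK0] at hc
      rw [hxdef]
      nlinarith
    have hS2 : S ≤ 2 ^ (d - 1) := by
      have h1 : S ≤ ∑ i ∈ Finset.range (d - 1), (2 : ℝ) ^ i := by
        rw [hSdef]
        exact Finset.sum_le_sum fun i _ => pow_le_pow_left₀ hx0.le hx2.le i
      have h2 : ∑ i ∈ Finset.range (d - 1), (2 : ℝ) ^ i = 2 ^ (d - 1) - 1 := by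
        rw [geom_sum_eq (by norm_num : (2 : ℝ) ≠ 1)]
        norm_num
      linarith
    have hnat : K * 2 ^ (d - 1) ≤ K ^ (D - 1) := by
      have h1 : 2 ^ (d - 1) ≤ 2 ^ (2 * (d - 2)) := Nat.pow_le_pow_right (by norm_num) (by omega)
      have h2 : 2 ^ (2 * (d - 2)) = 4 ^ (d - 2) := by
        rw [pow_mul]; norm_num
      have h3 : (4 : ℕ) ^ (d - 2) ≤ K ^ (D - 2) :=
        le_trans (Nat.pow_le_pow_left hK _) (Nat.pow_le_pow_right (by omega) (by omega))
      have h4 : K ^ (D - 1) = K * K ^ (D - 2) := by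
        rw [← pow_succ']
        congr 1
        omega
      rw [h4]
      exact Nat.mul_le_mul_left K (by omega)
    have hnat' : (K : ℝ) * 2 ^ (d - 1) ≤ (K : ℝ) ^ (D - 1) := by exact_mod_cast hnat
    have hterm : (K / L : ℝ) * S ≤ 1 / 2 := by
      rw [div_mul_eq_mul_div, div_le_iff₀ hL0']
      nlinarith [mul_le_mul_of_nonneg_left hS2 hK0.le]
    have hαhalf : α < 1 / 2 := by
      have h5 : 2 / (K : ℝ) ≤ 1 / 2 := by
        rw [div_le_div_iff₀ hK0 (by norm_num : (0:ℝ) < 2)]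
        linarith
      linarith
    have hpow : α ^ (d - 1) < 1 / 4 := by
      have h6 : α ^ (d - 1) < (1 / 2 : ℝ) ^ (d - 1) :=
        pow_lt_pow_left₀ hαhalf hα0.le (by omega)
      have h7 : ((1 : ℝ) / 2) ^ (d - 1) ≤ (1 / 2 : ℝ) ^ 2 :=
        pow_le_pow_of_le_one (by norm_num) (by norm_num) (by omega)
      norm_num at h7
      linarith
    linarith
  · -- case 2/K ≤ α, so α < αstar
    have hαs : α < αstar := by
      rcases lt_max_iff.mp hlt with h | h
      · exact absurd h (not_lt.mpr hc)
      · exact h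
    have hx2 : 2 ≤ x := by
      rw [hxdef]
      rw [div_le_iff₀ hK0] at hc
      linarith
    have hKne : (K : ℝ) ≠ 0 := ne_of_gt hK0
    set c : ℝ := (K : ℝ) ^ ((d : ℤ) - (D : ℤ)) with hcdef
    have hc0 : 0 < c := zpow_pos hK0 _
    have hcK : c * (K : ℝ) ^ (D - d) = 1 := by
      rw [hcdef, show ((K : ℝ) ^ (D - d) = (K : ℝ) ^ ((D - d : ℕ) : ℤ)) from
        (zpow_natCast _ _).symm, ← zpow_add₀ hKne,
        show (d : ℤ) - (D : ℤ) + ((D - d : ℕ) : ℤ) = 0 by omega, zpow_zero]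
    have hpowsplit : (K : ℝ) ^ (D - 1) = (K : ℝ) ^ (d - 1) * (K : ℝ) ^ (D - d) := by
      rw [← pow_add]
      congr 1
      omega
    have hcK1 : c * (K : ℝ) ^ (D - 1) = (K : ℝ) ^ (d - 1) := by
      rw [hpowsplit]
      calc c * ((K : ℝ) ^ (d - 1) * (K : ℝ) ^ (D - d))
          = (K : ℝ) ^ (d - 1) * (c * (K : ℝ) ^ (D - d)) := by ring
        _ = (K : ℝ) ^ (d - 1) := by rw [hcK, mul_one]
    -- S ≤ 2 * x^(d-2)
    have hSle : S ≤ 2 * x ^ (d - 2) := by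
      have : d - 1 = (d - 2) + 1 := by omega
      rw [hSdef, this]
      exact geom_sum_le_two_mul x hx2 (d - 2)
    -- K * S ≤ 2 * K^(d-1) * α^(d-2)
    have hKS : (K : ℝ) * S ≤ 2 * (K : ℝ) ^ (d - 1) * α ^ (d - 2) := by
      have hxp : x ^ (d - 2) = (K : ℝ) ^ (d - 2) * α ^ (d - 2) := mul_pow _ _ _
      have hKpow : (K : ℝ) * (K : ℝ) ^ (d - 2) = (K : ℝ) ^ (d - 1) := by
        rw [← pow_succ']
        congr 1
        omega
      calc (K : ℝ) * S ≤ (K : ℝ) * (2 * x ^ (d - 2)) :=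
            mul_le_mul_of_nonneg_left hSle hK0.le
        _ = 2 * (K : ℝ) ^ (d - 1) * α ^ (d - 2) := by
            rw [hxp]; rw [← hKpow]; ring
    -- first term ≤ α^(d-2) * c
    have hterm : (K / L : ℝ) * S ≤ α ^ (d - 2) * c := by
      rw [div_mul_eq_mul_div, div_le_iff₀ hL0']
      have had0 : 0 ≤ α ^ (d - 2) * c := by positivity
      nlinarith [mul_le_mul_of_nonneg_left hLK had0, hcK1, pow_pos hα0 (d - 2)]
    have hpow1 : α ^ (d - 1) = α ^ (d - 2) * α := by
      rw [← pow_succ]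
      congr 1
      omega
    have hstrict : α ^ (d - 2) * (c + α) < αstar ^ (d - 2) * (c + αstar) := by
      have hp : α ^ (d - 2) < αstar ^ (d - 2) :=
        pow_lt_pow_left₀ hαs hα0.le (by omega)
      exact mul_lt_mul'' hp (by linarith) (pow_nonneg hα0.le _) (by positivity)
    have hone : αstar ^ (d - 2) * (c + αstar) = 1 := by linarith [hroot]
    calc (K / L : ℝ) * S + α ^ (d - 1)
        ≤ α ^ (d - 2) * c + α ^ (d - 2) * α := by rw [← hpow1]; linarith
      _ = α ^ (d - 2) * (c + α) := by ring
      _ < αstar ^ (d - 2) * (c + αstar) := hstrict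
      _ = 1 := hone
end

section
/- Let K, d, D, L be positive integers with K ≥ 4, 2 < d ≤ D, and L ≥ 2·K^(D−1). Let α be a real number with 0 < α < 2/K and K·α ≠ 1. Then R(K, α, d, L) := K·((K·α)^(d−1) − 1)/(L·(K·α − 1)) + α^(d−1) < 1. (Case a in the proof of the paper's Theorem 1.) -/
/-- Case a in the proof of Theorem 1: if `0 < α < 2/K` (and `Kα ≠ 1`), the ratio
`R(K, α, d, L) = K((Kα)^(d-1) - 1)/(L(Kα - 1)) + α^(d-1)` is smaller than one. -/
theorem tree_ratio_lt_one_small_alpha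
    (K d D L : ℕ) (hK : 4 ≤ K) (hd : 2 < d) (hdD : d ≤ D) (hL0 : 0 < L)
    (hL : 2 * K ^ (D - 1) ≤ L)
    (α : ℝ) (hα0 : 0 < α) (hα1 : α < 2 / (K : ℝ)) (hKα : (K : ℝ) * α ≠ 1) :
    (K : ℝ) * (((K : ℝ) * α) ^ (d - 1) - 1) / ((L : ℝ) * ((K : ℝ) * α - 1))
      + α ^ (d - 1) < 1 := by
  have hK0 : (0:ℝ) < K := by positivity
  have hK4 : (4:ℝ) ≤ K := by exact_mod_cast hK
  have hL0' : (0:ℝ) < L := by exact_mod_cast hL0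
  set x : ℝ := (K:ℝ) * α with hxdef
  have hx0 : 0 < x := mul_pos hK0 hα0
  have hx2 : x < 2 := by
    have h := mul_lt_mul_of_pos_left hα1 hK0
    have : (K:ℝ) * (2 / K) = 2 := by field_simp
    linarith [this ▸ h]
  have hgeom : (x ^ (d-1) - 1)/(x - 1) = ∑ i ∈ Finset.range (d-1), x ^ i :=
    (geom_sum_eq hKα (d-1)).symm
  have h1 : (K:ℝ) * (x ^ (d-1) - 1) / ((L:ℝ) * (x - 1))
      = (K:ℝ)/(L:ℝ) * ((x ^ (d-1) - 1)/(x-1)) := (div_mul_div_comm _ _ _ _).symm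
  rw [h1, hgeom]
  have hsum : ∑ i ∈ Finset.range (d-1), x ^ i ≤ ∑ i ∈ Finset.range (d-1), (2:ℝ) ^ i :=
    Finset.sum_le_sum fun i _ => pow_le_pow_left₀ hx0.le hx2.le i
  have hsum2 : ∑ i ∈ Finset.range (d-1), (2:ℝ) ^ i = 2 ^ (d-1) - 1 := by
    rw [geom_sum_eq (by norm_num : (2:ℝ) ≠ 1) (d-1)]; norm_num
  -- natural-number bound : 2 * (K * 2^(d-1)) ≤ L
  have hLbig : 2 * ((K:ℝ) * 2 ^ (d-1)) ≤ L := by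
    have h24 : 2 ^ (d-1) ≤ 4 ^ (d-2) := by
      have : (4:ℕ) ^ (d-2) = 2 ^ (2*(d-2)) := by
        rw [pow_mul]; norm_num
      rw [this]
      exact Nat.pow_le_pow_right (by norm_num) (by omega)
    have h4K : (4:ℕ) ^ (d-2) ≤ K ^ (d-2) := Nat.pow_le_pow_left hK _
    have hKd : K * 2 ^ (d-1) ≤ K ^ (d-1) := by
      calc K * 2 ^ (d-1) ≤ K * K ^ (d-2) :=
            Nat.mul_le_mul_left _ (le_trans h24 h4K)
        _ = K ^ (d-1) := by
            rw [← pow_succ']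
            congr 1
            omega
    have hnat : 2 * (K * 2 ^ (d-1)) ≤ L := by
      calc 2 * (K * 2 ^ (d-1)) ≤ 2 * K ^ (d-1) := Nat.mul_le_mul_left _ hKd
        _ ≤ 2 * K ^ (D-1) := Nat.mul_le_mul_left _ (Nat.pow_le_pow_right (by omega) (by omega))
        _ ≤ L := hL
    exact_mod_cast hnat
  have hKL : (0:ℝ) < (K:ℝ)/L := by positivity
  have hterm1 : (K:ℝ)/(L:ℝ) * (∑ i ∈ Finset.range (d-1), x ^ i) < 1/2 := by
    have hlt : (∑ i ∈ Finset.range (d-1), x ^ i) < 2 ^ (d-1) := by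
      rw [hsum2] at hsum; linarith
    calc (K:ℝ)/(L:ℝ) * (∑ i ∈ Finset.range (d-1), x ^ i)
        < (K:ℝ)/(L:ℝ) * 2 ^ (d-1) := by
          exact mul_lt_mul_of_pos_left hlt hKL
      _ ≤ 1/2 := by
          rw [div_mul_eq_mul_div, div_le_iff₀ hL0']
          linarith
  -- second term
  have hα12 : α < 1/2 := by
    have : (2:ℝ)/K ≤ 1/2 := by
      rw [div_le_div_iff₀ hK0 (by norm_num)]; linarith
    linarith
  have hterm2 : α ^ (d-1) < 1/4 := by
    have hle : α ^ (d-1) ≤ α ^ 2 :=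
      pow_le_pow_of_le_one hα0.le (by linarith) (by omega)
    have : α ^ 2 < (1/2:ℝ) ^ 2 := by
      exact pow_lt_pow_left₀ hα12 hα0.le (by norm_num)
    norm_num at this
    linarith
  linarith
end

section
/- Let K, d, D, L be positive integers with K ≥ 4, 2 < d ≤ D, and L ≥ 2·K^(D−1). Let α be a real number with 2/K ≤ α < 1. Then R(K, α, d, L) := K·((K·α)^(d−1) − 1)/(L·(K·α − 1)) + α^(d−1) ≤ α^(d−2)·(K^(d−D) + α). (Case b bound in the proof of the paper's Theorem 1; note K·α ≥ 2 here, so the expression is well defined.) -/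
/-- Case b bound in the proof of Theorem 1: if `2/K ≤ α < 1`, then the ratio
`R(K, α, d, L) = K((Kα)^(d-1) - 1)/(L(Kα - 1)) + α^(d-1)` is bounded above by
`α^(d-2) * (K^(d-D) + α)`. -/
theorem tree_ratio_le_bound_big_alpha
    (K d D L : ℕ) (hK : 4 ≤ K) (hd : 2 < d) (hdD : d ≤ D) (hL0 : 0 < L)
    (hL : 2 * K ^ (D - 1) ≤ L)
    (α : ℝ) (hα0 : 2 / (K : ℝ) ≤ α) (hα1 : α < 1) :
    (K : ℝ) * (((K : ℝ) * α) ^ (d - 1) - 1) / ((L : ℝ) * ((K : ℝ) * α - 1))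
      + α ^ (d - 1)
      ≤ α ^ (d - 2) * ((K : ℝ) ^ ((d : ℤ) - (D : ℤ)) + α) := by
  obtain ⟨e, rfl⟩ : ∃ e, d = e + 3 := ⟨d - 3, by omega⟩
  obtain ⟨m, rfl⟩ : ∃ m, D = (e + 3) + m := ⟨D - (e + 3), by omega⟩
  have hK4 : (4 : ℝ) ≤ (K : ℝ) := by exact_mod_cast hK
  have hKpos : (0 : ℝ) < K := by linarith
  have hαpos : 0 < α := lt_of_lt_of_le (by positivity) hα0
  have hx : (2 : ℝ) ≤ (K : ℝ) * α := by
    rw [div_le_iff₀ hKpos] at hα0; linarith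
  have hLR : 2 * (K : ℝ) ^ (e + m + 2) ≤ (L : ℝ) := by
    have : 2 * K ^ (e + m + 2) ≤ L := by
      have : e + 3 + m - 1 = e + m + 2 := by omega
      rwa [this] at hL
    exact_mod_cast this
  have hd1 : e + 3 - 1 = e + 2 := by omega
  have hd2 : e + 3 - 2 = e + 1 := by omega
  rw [hd1, hd2]
  have hexp : ((e + 3 : ℕ) : ℤ) - ((e + 3 + m : ℕ) : ℤ) = -(m : ℤ) := by
    push_cast; ring
  rw [hexp, zpow_neg, zpow_natCast]
  have hKm : (0 : ℝ) < (K : ℝ) ^ m := by positivity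
  have h1 : (K : ℝ) * (((K : ℝ) * α) ^ (e + 2) - 1) / ((L : ℝ) * ((K : ℝ) * α - 1))
      ≤ α ^ (e + 1) / (K : ℝ) ^ m := by
    have hnum : (K : ℝ) * (((K : ℝ) * α) ^ (e + 2) - 1) ≤ (K : ℝ) * ((K : ℝ) * α) ^ (e + 2) := by
      have : ((K : ℝ) * α) ^ (e + 2) - 1 ≤ ((K : ℝ) * α) ^ (e + 2) := by linarith
      exact mul_le_mul_of_nonneg_left this (le_of_lt hKpos)
    have hden : (K : ℝ) ^ (e + m + 2) * ((K : ℝ) * α)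
        ≤ (L : ℝ) * ((K : ℝ) * α - 1) := by
      have h2x : (K : ℝ) * α ≤ 2 * ((K : ℝ) * α - 1) := by linarith
      calc (K : ℝ) ^ (e + m + 2) * ((K : ℝ) * α)
          ≤ (K : ℝ) ^ (e + m + 2) * (2 * ((K : ℝ) * α - 1)) :=
            mul_le_mul_of_nonneg_left h2x (by positivity)
        _ = 2 * (K : ℝ) ^ (e + m + 2) * ((K : ℝ) * α - 1) := by ring
        _ ≤ (L : ℝ) * ((K : ℝ) * α - 1) :=
            mul_le_mul_of_nonneg_right hLR (by linarith)
    have hdenpos : (0 : ℝ) < (K : ℝ) ^ (e + m + 2) * ((K : ℝ) * α) := by positivity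
    have := div_le_div₀ (by positivity) hnum hdenpos hden
    refine this.trans (le_of_eq ?_)
    have hKne : (K : ℝ) ≠ 0 := ne_of_gt hKpos
    have hαne : α ≠ 0 := ne_of_gt hαpos
    rw [mul_pow]
    field_simp
    ring
  have heq : α ^ (e + 1) * (((K : ℝ) ^ m)⁻¹ + α)
      = α ^ (e + 1) / (K : ℝ) ^ m + α ^ (e + 2) := by
    field_simp
    ring
  rw [heq]
  linarith
end

section
/- Let K, d, D, L be positive integers with 2 ≤ d ≤ D − 2 and L ≥ 2·K^(D−1), and let α be a real number with 0 < α < 1 − 1/(2·K). Define N(d) := (Σ_{i=0}^{d−2} K^(i+1)·α^i) + L·α^(d−1), the number of non-zero weight values (per feature-dimension unit) in a balanced K-ary tree model of depth d. Then N(d) > N(d+1), i.e., a deeper balanced tree has strictly fewer non-zero weight values. (Paper's Theorem 2, count form.) -/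
open Finset in
/-- Theorem 2 of the paper (count form): for `2 ≤ d ≤ D - 2` and `α < 1 - 1/(2K)`,
the number of non-zero weight values (per feature-dimension unit)
`N(d) = (∑_{i=0}^{d-2} K^(i+1) α^i) + L α^(d-1)` of a balanced `K`-ary tree of depth `d`
is strictly larger than that of a tree of depth `d + 1`. -/
theorem tree_nnz_decreasing_in_depth
    (K d D L : ℕ) (hK0 : 0 < K) (hL0 : 0 < L) (hd : 2 ≤ d) (hdD : d + 2 ≤ D)
    (hL : 2 * K ^ (D - 1) ≤ L)
    (α : ℝ) (hα0 : 0 < α) (hα1 : α < 1 - 1 / (2 * (K : ℝ))) :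
    (∑ i ∈ range (d - 1), (K : ℝ) ^ (i + 1) * α ^ i) + (L : ℝ) * α ^ (d - 1) >
    (∑ i ∈ range ((d + 1) - 1), (K : ℝ) ^ (i + 1) * α ^ i) + (L : ℝ) * α ^ ((d + 1) - 1) := by
  obtain ⟨e, rfl⟩ : ∃ e, d = e + 1 := ⟨d - 1, (Nat.succ_pred_eq_of_pos (by omega)).symm⟩
  simp only [Nat.add_sub_cancel]
  rw [sum_range_succ]
  have hKpos : (0:ℝ) < (K:ℝ) := by exact_mod_cast hK0
  have hLpos : (0:ℝ) < (L:ℝ) := by exact_mod_cast hL0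
  have hαe : (0:ℝ) < α ^ e := pow_pos hα0 e
  have key : (K:ℝ) ^ (e + 1) + (L:ℝ) * α < (L:ℝ) := by
    have h1 : (K:ℝ) ^ (e + 1) ≤ (K:ℝ) ^ (D - 2) :=
      pow_le_pow_right₀ (by exact_mod_cast hK0) (by omega)
    have h2 : (2:ℝ) * (K:ℝ) ^ (D - 1) ≤ (L:ℝ) := by exact_mod_cast hL
    have h3 : (K:ℝ) ^ (D - 1) = (K:ℝ) ^ (D - 2) * K := by
      rw [← pow_succ]; congr 1; omega
    have h6 : (1:ℝ)/(2*K) < 1 - α := by linarith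
    have h7 : (1:ℝ) < (1-α)*(2*K) := by
      rw [div_lt_iff₀ (by positivity)] at h6; linarith
    nlinarith [mul_le_mul_of_nonneg_right h1 (le_of_lt hKpos),
      mul_lt_mul_of_pos_left h7 hLpos]
  nlinarith [mul_lt_mul_of_pos_right key hαe, pow_succ α e]
end

section
/- Let K, d, D, L be positive integers with 2 ≤ d ≤ D − 2 and L ≥ 2·K^(D−1), and let α be a real number with 0 < α < 1 − 1/(2·K) and K·α ≠ 1. Then K·((K·α)^d − 1)/(L·(K·α − 1)) + α^d < K·((K·α)^(d−1) − 1)/(L·(K·α − 1)) + α^(d−1); that is, the ratio R(K, α, d, L) of the tree-model size to the one-vs-rest model size is strictly decreasing in the depth d on this range. (Paper's Theorem 2, ratio form.) -/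
/-- Theorem 2 of the paper (ratio form): for `2 ≤ d ≤ D - 2`, `α < 1 - 1/(2K)` and
`Kα ≠ 1`, the ratio `R(K, α, d, L) = K((Kα)^(d-1) - 1)/(L(Kα - 1)) + α^(d-1)` of the
tree-model size to the OVR model size is strictly decreasing in the depth `d`. -/
theorem tree_ratio_decreasing_in_depth
    (K d D L : ℕ) (hK0 : 0 < K) (hL0 : 0 < L) (hd : 2 ≤ d) (hdD : d + 2 ≤ D)
    (hL : 2 * K ^ (D - 1) ≤ L)
    (α : ℝ) (hα0 : 0 < α) (hα1 : α < 1 - 1 / (2 * (K : ℝ)))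
    (hKα : (K : ℝ) * α ≠ 1) :
    (K : ℝ) * (((K : ℝ) * α) ^ d - 1) / ((L : ℝ) * ((K : ℝ) * α - 1)) + α ^ d <
    (K : ℝ) * (((K : ℝ) * α) ^ (d - 1) - 1) / ((L : ℝ) * ((K : ℝ) * α - 1))
      + α ^ (d - 1) := by
  obtain ⟨e, rfl⟩ : ∃ e, d = e + 1 := ⟨d - 1, by omega⟩
  simp only [Nat.add_sub_cancel]
  have hK1 : (1:ℝ) ≤ (K:ℝ) := by exact_mod_cast hK0
  have hKpos : (0:ℝ) < (K:ℝ) := by positivity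
  have hL0' : (0:ℝ) < (L:ℝ) := by exact_mod_cast hL0
  have hβ : (K:ℝ)*α - 1 ≠ 0 := sub_ne_zero.mpr hKα
  have key : (K : ℝ) * (((K : ℝ) * α) ^ (e+1) - 1) / ((L : ℝ) * ((K : ℝ) * α - 1))
      = (K : ℝ) * (((K : ℝ) * α) ^ e - 1) / ((L : ℝ) * ((K : ℝ) * α - 1))
        + (K:ℝ) * ((K:ℝ)*α)^e / (L:ℝ) := by
    field_simp
    ring
  rw [key]
  have hαe : (0:ℝ) < α ^ e := pow_pos hα0 e
  have hKL : (K:ℝ)^(e+1) / (L:ℝ) < 1 - α := by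
    have h2K : 2 * (K:ℝ)^(e+2) ≤ (L:ℝ) := by
      have hp : K^(e+2) ≤ K^(D-1) := Nat.pow_le_pow_right hK0 (by omega)
      have : 2 * K^(e+2) ≤ L := le_trans (by omega) hL
      exact_mod_cast this
    have hKe2 : (0:ℝ) < 2*(K:ℝ)^(e+2) := by positivity
    have hstep : (K:ℝ)^(e+1) / (L:ℝ) ≤ (K:ℝ)^(e+1) / (2*(K:ℝ)^(e+2)) :=
      div_le_div_of_nonneg_left (by positivity) hKe2 h2K
    have heq : (K:ℝ)^(e+1) / (2*(K:ℝ)^(e+2)) = 1 / (2*(K:ℝ)) := by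
      rw [pow_succ]
      field_simp
      ring
    have hinv : 1 / (2*(K:ℝ)) < 1 - α := by linarith
    calc (K:ℝ)^(e+1) / (L:ℝ) ≤ 1 / (2*(K:ℝ)) := by rw [← heq]; exact hstep
      _ < 1 - α := hinv
  have h1 : (K:ℝ) * ((K:ℝ)*α)^e / (L:ℝ) < α ^ e * (1 - α) := by
    have hrw : (K:ℝ) * ((K:ℝ)*α)^e / (L:ℝ) = ((K:ℝ)^(e+1) / (L:ℝ)) * α ^ e := by
      rw [mul_pow, pow_succ]
      ring
    rw [hrw]
    calc ((K:ℝ)^(e+1) / (L:ℝ)) * α ^ e < (1 - α) * α ^ e :=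
          mul_lt_mul_of_pos_right hKL hαe
      _ = α ^ e * (1 - α) := mul_comm _ _
  have hpow2 : α ^ (e+1) = α ^ e * α := pow_succ α e
  nlinarith [h1, hpow2]
end
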